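/- (Deterministic core of 'the algorithm never enters the recovery phase' in the fully stochastic setting.) Let τ ∈ ℕ with τ ≥ 1, let ρ > 0 satisfy ρ = sup_{ξ∈Ξ} min_{i∈[m]}(−ḡ_i(ξ)), let 0 < ρ̃ ≤ ρ/2, and let x_1,…,x_τ ∈ X, λ_1,…,λ_τ ∈ D_{ρ̃}, reward functions f_t : X → [0,1], constraint functions g_t : X → [−1,1]^m, measurable f̄ : X → [0,1] and ḡ : X → [−1,1]^m, ξ* ∈ Ξ with ḡ_i(ξ*) ≤ 0 for all i and f̄(ξ*) = OPT_{f̄,ḡ}, and constants R^P, R^D, E ≥ 0. Assume: (i) Σ_{t=1}^{τ}(f_t(x_t) − ⟨λ_t,g_t(x_t)⟩) ≥ Σ_{t=1}^{τ}(f_t(ξ*) − ⟨λ_t,g_t(ξ*)⟩) − (1+2/ρ̃)R^P; (ii) for every λ ∈ D_{ρ̃}, Σ_{t=1}^{τ}⟨λ_t, g_t(x_t)⟩ ≥ Σ_{t=1}^{τ}⟨λ, g_t(x_t)⟩ − R^D/ρ̃; (iii) |Σ_{t=1}^{τ} f_t(ξ*) − τ·f̄(ξ*)| ≤ E and |Σ_{t=1}^{τ}⟨λ_t,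 g_t(ξ*)⟩ − Σ_{t=1}^{τ}⟨λ_t, ḡ(ξ*)⟩| ≤ E/ρ̃; (iv) |Σ_{t=1}^{τ} f_t(x_t) − Σ_{t=1}^{τ} f̄(x_t)| ≤ E and, for every i ∈ [m], |Σ_{t=1}^{τ} g_{t,i}(x_t) − Σ_{t=1}^{τ} ḡ_i(x_t)| ≤ E. Then for every i ∈ [m]: Σ_{t=1}^{τ} g_{t,i}(x_t) ≤ (2+3/ρ̃)E + (1+2/ρ̃)R^P + R^D/ρ̃. -/

import Mathlib

open MeasureTheory Finset

/-- `OPT_{f̄,ḡ} = sup { f̄(ξ) : ξ ∈ Ξ, ḡ_i(ξ) ≤ 0 ∀ i }`. -/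
noncomputable def OPTval {X : Type} [MeasurableSpace X] {m : ℕ}
    (f : X → ℝ) (g : Fin m → X → ℝ) : ℝ :=
  sSup {r : ℝ | ∃ ξ : ProbabilityMeasure X,
    (∀ i, ∫ y, g i y ∂(ξ : Measure X) ≤ 0) ∧ r = ∫ y, f y ∂(ξ : Measure X)}

/-- `d_ḡ = sup_{ξ∈Ξ} min_{i∈[m]} (−ḡ_i(ξ))`. -/
noncomputable def dgval {X : Type} [MeasurableSpace X] {m : ℕ}
    (g : Fin m → X → ℝ) : ℝ :=
  sSup {r : ℝ | ∃ ξ : ProbabilityMeasure X, r = ⨅ i, -(∫ y, g i y ∂(ξ : Measure X))}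

/-!
Let `S` be the largest cumulative violation `∑ₜ g_{t,i}(x_t)`, attained at `i₀`. The dual regret
bound tested at `λ = e_{i₀} / ρ̃` gives `S / ρ̃ ≲ ∑ₜ ⟨λ_t, g_t(x_t)⟩`, and the primal regret bound
against the feasible `ξ*`, with the concentration estimates, bounds this by
`∑ₜ f̄(x_t) - τ · OPT` up to `O(E, R^P)`. The empirical measure of the trajectory violates each
constraint by at most `(S + E) / τ`; mixing it with a measure of slack close to `ρ` makes it
feasible at a cost of `(S + E) / (τ ρ)` in value, so `∑ₜ f̄(x_t) ≤ τ · OPT + (S + E) / ρ`.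
Since `ρ̃ ≤ ρ / 2`, the term `S / ρ` is at most half of `S / ρ̃`, which leaves `S` bounded.
-/

open Filter Topology
open scoped ENNReal

section Measures

variable {X : Type*} [MeasurableSpace X]

lemma integrable_of_mem_Icc {μ : Measure X} [IsFiniteMeasure μ] {h : X → ℝ}
    (hm : Measurable h) {a b : ℝ} (hb : ∀ y, h y ∈ Set.Icc a b) : Integrable h μ :=
  .of_bound hm.aestronglyMeasurable (max |a| |b|)
    (.of_forall fun y => abs_le_max_abs_abs (hb y).1 (hb y).2)

noncomputable def convexMix (γ : ℝ) (μ ν : Measure X) : Measure X :=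
  ENNReal.ofReal (1 - γ) • μ + ENNReal.ofReal γ • ν

lemma isProbabilityMeasure_convexMix {γ : ℝ} (h0 : 0 ≤ γ) (h1 : γ ≤ 1) (μ ν : Measure X)
    [IsProbabilityMeasure μ] [IsProbabilityMeasure ν] :
    IsProbabilityMeasure (convexMix γ μ ν) := by
  constructor
  simp only [convexMix, Measure.add_apply, Measure.smul_apply, measure_univ, smul_eq_mul,
    mul_one, ← ENNReal.ofReal_add (sub_nonneg.mpr h1) h0, sub_add_cancel, ENNReal.ofReal_one]

lemma integral_convexMix {γ : ℝ} (h0 : 0 ≤ γ) (h1 : γ ≤ 1) {μ ν : Measure X} {h : X → ℝ}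
    (hμ : Integrable h μ) (hν : Integrable h ν) :
    ∫ y, h y ∂(convexMix γ μ ν) = (1 - γ) * ∫ y, h y ∂μ + γ * ∫ y, h y ∂ν := by
  rw [convexMix, integral_add_measure (hμ.smul_measure ENNReal.ofReal_ne_top)
      (hν.smul_measure ENNReal.ofReal_ne_top), integral_smul_measure, integral_smul_measure,
    ENNReal.toReal_ofReal (sub_nonneg.mpr h1), ENNReal.toReal_ofReal h0, smul_eq_mul, smul_eq_mul]

noncomputable def empiricalMeasure {ι : Type*} (s : Finset ι) (x : ι → X) : Measure X :=
  (#s : ℝ≥0∞)⁻¹ • ∑ t ∈ s, Measure.dirac (x t)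

lemma isProbabilityMeasure_empiricalMeasure {ι : Type*} {s : Finset ι} (hs : s.Nonempty)
    (x : ι → X) : IsProbabilityMeasure (empiricalMeasure s x) := by
  constructor
  simp [empiricalMeasure, Measure.smul_apply, Measure.finsetSum_apply,
    ENNReal.inv_mul_cancel (Nat.cast_ne_zero.mpr hs.card_pos.ne') (ENNReal.natCast_ne_top _)]

lemma integral_empiricalMeasure {ι : Type*} (s : Finset ι) (x : ι → X) {h : X → ℝ}
    (hm : Measurable h) :
    ∫ y, h y ∂(empiricalMeasure s x) = (#s : ℝ)⁻¹ * ∑ t ∈ s, h (x t) := by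
  rw [empiricalMeasure, integral_smul_measure, integral_finsetSum_measure
      fun t _ => integrable_dirac' hm.stronglyMeasurable enorm_lt_top]
  simp [integral_dirac' h _ hm.stronglyMeasurable, ENNReal.toReal_inv]

end Measures

section Program

variable {X : Type} [MeasurableSpace X] {m : ℕ} {fbar : X → ℝ} {gbar : Fin m → X → ℝ}

lemma integral_le_OPTval (hfb : ∀ y, fbar y ∈ Set.Icc (0 : ℝ) 1) (μ : Measure X)
    [IsProbabilityMeasure μ] (hμ : ∀ i, ∫ y, gbar i y ∂μ ≤ 0) :
    ∫ y, fbar y ∂μ ≤ OPTval fbar gbar := by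
  refine le_csSup ⟨1, ?_⟩ ⟨⟨μ, ‹_›⟩, hμ, rfl⟩
  rintro r ⟨ξ, -, rfl⟩
  simpa using integral_mono_of_nonneg (μ := (ξ : Measure X)) (.of_forall fun y => (hfb y).1)
    (integrable_const (1 : ℝ)) (.of_forall fun y => (hfb y).2)

lemma dgval_le_one [Nonempty (Fin m)] (hgm : ∀ i, Measurable (gbar i))
    (hgb : ∀ i y, gbar i y ∈ Set.Icc (-1 : ℝ) 1) : dgval gbar ≤ 1 := by
  refine Real.sSup_le ?_ zero_le_one
  rintro r ⟨ξ, rfl⟩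
  let i : Fin m := Classical.arbitrary _
  have hge : -1 ≤ ∫ y, gbar i y ∂(ξ : Measure X) := by
    simpa using integral_mono (μ := (ξ : Measure X)) (integrable_const (-1 : ℝ))
      (integrable_of_mem_Icc (hgm i) (hgb i)) fun y => (hgb i y).1
  exact (ciInf_le (Set.finite_range _).bddBelow i).trans (by linarith)

lemma exists_forall_integral_le_neg_of_lt_dgval {ρ : ℝ} (hρ0 : 0 ≤ ρ) (hρ : ρ < dgval gbar) :
    ∃ ξ : ProbabilityMeasure X, ∀ i, ∫ y, gbar i y ∂(ξ : Measure X) ≤ -ρ := by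
  by_contra! h
  refine hρ.not_ge (Real.sSup_le ?_ hρ0)
  rintro r ⟨ξ, rfl⟩
  obtain ⟨i, hi⟩ := h ξ
  exact (ciInf_le (Set.finite_range _).bddBelow i).trans (by linarith)

/-- The mixture `(ρ • μ + w • ξ) / (w + ρ)` is feasible and loses at most `w / ρ` in value. -/
lemma integral_le_OPTval_add_div_of_strictly_feasible (hfm : Measurable fbar)
    (hfb : ∀ y, fbar y ∈ Set.Icc (0 : ℝ) 1) (hgm : ∀ i, Measurable (gbar i))
    (hgb : ∀ i y, gbar i y ∈ Set.Icc (-1 : ℝ) 1) (μ ξ : Measure X) [IsProbabilityMeasure μ]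
    [IsProbabilityMeasure ξ] {w ρ : ℝ} (hw : 0 ≤ w) (hρ : 0 < ρ)
    (hμ : ∀ i, ∫ y, gbar i y ∂μ ≤ w) (hξ : ∀ i, ∫ y, gbar i y ∂ξ ≤ -ρ) :
    ∫ y, fbar y ∂μ ≤ OPTval fbar gbar + w / ρ := by
  set γ := w / (w + ρ)
  have hγ0 : 0 ≤ γ := by positivity
  have hγ1 : γ ≤ 1 := div_le_one_of_le₀ (by linarith) (by positivity)
  have hγw : γ ≤ w / ρ := div_le_div_of_nonneg_left hw hρ (by linarith)
  have hbalance : (1 - γ) * w = γ * ρ := by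
    simp only [γ]
    field_simp
    ring
  have := isProbabilityMeasure_convexMix hγ0 hγ1 μ ξ
  have hfeas : ∀ i, ∫ y, gbar i y ∂(convexMix γ μ ξ) ≤ 0 := fun i => by
    rw [integral_convexMix hγ0 hγ1 (integrable_of_mem_Icc (hgm i) (hgb i))
      (integrable_of_mem_Icc (hgm i) (hgb i))]
    nlinarith [hμ i, hξ i]
  have hopt := integral_le_OPTval hfb _ hfeas
  rw [integral_convexMix hγ0 hγ1 (integrable_of_mem_Icc hfm hfb)
    (integrable_of_mem_Icc hfm hfb)] at hopt
  have hμ1 : ∫ y, fbar y ∂μ ≤ 1 := by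
    simpa using integral_mono (μ := μ) (integrable_of_mem_Icc hfm hfb) (integrable_const (1 : ℝ))
      fun y => (hfb y).2
  have hξ0 : 0 ≤ ∫ y, fbar y ∂ξ := integral_nonneg fun y => (hfb y).1
  nlinarith

lemma integral_le_OPTval_add_div_dgval (hfm : Measurable fbar)
    (hfb : ∀ y, fbar y ∈ Set.Icc (0 : ℝ) 1) (hgm : ∀ i, Measurable (gbar i))
    (hgb : ∀ i y, gbar i y ∈ Set.Icc (-1 : ℝ) 1) (hd : 0 < dgval gbar) (μ : Measure X)
    [IsProbabilityMeasure μ] {w : ℝ} (hw : 0 ≤ w) (hμ : ∀ i, ∫ y, gbar i y ∂μ ≤ w) :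
    ∫ y, fbar y ∂μ ≤ OPTval fbar gbar + w / dgval gbar := by
  have hlim : Tendsto (fun ρ => OPTval fbar gbar + w / ρ) (𝓝[<] dgval gbar)
      (𝓝 (OPTval fbar gbar + w / dgval gbar)) :=
    (continuousAt_const.add (continuousAt_const.div continuousAt_id hd.ne')).tendsto.mono_left
      nhdsWithin_le_nhds
  refine ge_of_tendsto hlim ?_
  filter_upwards [Ioo_mem_nhdsLT hd] with ρ hρ
  obtain ⟨ξ, hξ⟩ := exists_forall_integral_le_neg_of_lt_dgval hρ.1.le hρ.2
  exact integral_le_OPTval_add_div_of_strictly_feasible hfm hfb hgm hgb μ ξ hw hρ.1 hμ hξ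

lemma sum_le_card_mul_OPTval_add_div_dgval (hfm : Measurable fbar)
    (hfb : ∀ y, fbar y ∈ Set.Icc (0 : ℝ) 1) (hgm : ∀ i, Measurable (gbar i))
    (hgb : ∀ i y, gbar i y ∈ Set.Icc (-1 : ℝ) 1) (hd : 0 < dgval gbar) {ι : Type*}
    {s : Finset ι} (hs : s.Nonempty) (x : ι → X) {w : ℝ} (hw : 0 ≤ w)
    (hsum : ∀ i, ∑ t ∈ s, gbar i (x t) ≤ w) :
    ∑ t ∈ s, fbar (x t) ≤ #s * OPTval fbar gbar + w / dgval gbar := by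
  have hcard : (0 : ℝ) < #s := by exact_mod_cast hs.card_pos
  have := isProbabilityMeasure_empiricalMeasure hs x
  have h := integral_le_OPTval_add_div_dgval hfm hfb hgm hgb hd (empiricalMeasure s x)
    (div_nonneg hw hcard.le) fun i => by
      rw [integral_empiricalMeasure s x (hgm i), inv_mul_eq_div]
      exact div_le_div_of_nonneg_right (hsum i) hcard.le
  rw [integral_empiricalMeasure s x hfm, inv_mul_le_iff₀ hcard] at h
  calc ∑ t ∈ s, fbar (x t) ≤ #s * (OPTval fbar gbar + w / #s / dgval gbar) := h
    _ = #s * OPTval fbar gbar + w / dgval gbar := by field_simp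

end Program

lemma le_of_div_le_div_add {S E RP RD ρ ρt : ℝ} (hρt : 0 < ρt) (hρt2 : ρt ≤ ρ / 2)
    (hρ1 : ρ ≤ 1) (hE : 0 ≤ E) (hRP : 0 ≤ RP) (hRD : 0 ≤ RD) (hSE : 0 ≤ S + E)
    (h : S / ρt - RD / ρt ≤ (S + E) / ρ + 2 * E + E / ρt + (1 + 2 / ρt) * RP) :
    S ≤ (2 + 3 / ρt) * E + (1 + 2 / ρt) * RP + RD / ρt := by
  have hhalf : ρt * ((S + E) / ρ) ≤ (S + E) / 2 := by
    rw [mul_div_assoc', div_le_div_iff₀ (by linarith) two_pos]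
    nlinarith
  have hscaled : S - RD ≤ ρt * ((S + E) / ρ) + 2 * ρt * E + E + (ρt + 2) * RP := by
    have := mul_le_mul_of_nonneg_left h hρt.le
    field_simp at this ⊢
    linarith
  have hinv : 2 ≤ 1 / ρt := by rw [le_div_iff₀ hρt]; linarith
  have hE' : 4 * ρt * E ≤ 2 * E := by nlinarith
  have hRP' : ρt * RP ≤ RP := by nlinarith
  rw [div_eq_mul_one_div 3, div_eq_mul_one_div 2, div_eq_mul_one_div RD]
  nlinarith [mul_le_mul_of_nonneg_left hinv hE, mul_le_mul_of_nonneg_left hinv hRP,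
    mul_le_mul_of_nonneg_left hinv hRD]

theorem statement10_general {X : Type} [MeasurableSpace X] {m : ℕ}
    (τ : ℕ) (hτ : 1 ≤ τ)
    (ρ ρt : ℝ)
    (gbar : Fin m → X → ℝ) (hgbm : ∀ i, Measurable (gbar i))
    (hgb1 : ∀ i y, gbar i y ∈ Set.Icc (-1:ℝ) 1)
    (hρ : ρ = dgval gbar)
    (hρt : 0 < ρt) (hρt2 : ρt ≤ ρ / 2)
    (x : ℕ → X) (lam : ℕ → Fin m → ℝ)
    -- the dual iterates lie in `D_{ρ̃}`
    (hlam : ∀ t ∈ Finset.Icc 1 τ, (∀ i, 0 ≤ lam t i) ∧ ∑ i, lam t i ≤ 1 / ρt)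
    (f : ℕ → X → ℝ) (g : ℕ → Fin m → X → ℝ)
    (fbar : X → ℝ) (hfbm : Measurable fbar) (hfb01 : ∀ y, fbar y ∈ Set.Icc (0:ℝ) 1)
    (ξs : ProbabilityMeasure X)
    (hfeas : ∀ i, ∫ y, gbar i y ∂(ξs : Measure X) ≤ 0)
    (hopt : (∫ y, fbar y ∂(ξs : Measure X)) = OPTval fbar gbar)
    (RP RD E : ℝ) (hRP : 0 ≤ RP) (hRD : 0 ≤ RD) (hE : 0 ≤ E)
    -- (i) primal regret bound
    (h1 : ∑ t ∈ Finset.Icc 1 τ, (f t (x t) - ∑ i, lam t i * g t i (x t)) ≥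
          ∑ t ∈ Finset.Icc 1 τ, ((∫ y, f t y ∂(ξs : Measure X)) -
            ∑ i, lam t i * ∫ y, g t i y ∂(ξs : Measure X)) - (1 + 2 / ρt) * RP)
    -- (ii) dual regret bound
    (h2 : ∀ l : Fin m → ℝ, (∀ i, 0 ≤ l i) → (∑ i, l i ≤ 1 / ρt) →
          ∑ t ∈ Finset.Icc 1 τ, ∑ i, lam t i * g t i (x t) ≥
          ∑ t ∈ Finset.Icc 1 τ, ∑ i, l i * g t i (x t) - RD / ρt)
    -- (iii) concentration at ξ*
    (h3a : |∑ t ∈ Finset.Icc 1 τ, (∫ y, f t y ∂(ξs : Measure X)) -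
             (τ : ℝ) * ∫ y, fbar y ∂(ξs : Measure X)| ≤ E)
    (h3b : |∑ t ∈ Finset.Icc 1 τ, ∑ i, lam t i * ∫ y, g t i y ∂(ξs : Measure X) -
             ∑ t ∈ Finset.Icc 1 τ, ∑ i, lam t i * ∫ y, gbar i y ∂(ξs : Measure X)| ≤ E / ρt)
    -- (iv) concentration along the trajectory
    (h4a : |∑ t ∈ Finset.Icc 1 τ, f t (x t) - ∑ t ∈ Finset.Icc 1 τ, fbar (x t)| ≤ E)
    (h4b : ∀ i, |∑ t ∈ Finset.Icc 1 τ, g t i (x t) -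
             ∑ t ∈ Finset.Icc 1 τ, gbar i (x t)| ≤ E) :
    ∀ i, ∑ t ∈ Finset.Icc 1 τ, g t i (x t) ≤
      (2 + 3 / ρt) * E + (1 + 2 / ρt) * RP + RD / ρt := by
  intro i
  have : Nonempty (Fin m) := ⟨i⟩
  set S : Fin m → ℝ := fun j => ∑ t ∈ Icc 1 τ, g t j (x t)
  obtain ⟨i₀, -, hmax⟩ := exists_max_image univ S ⟨i, mem_univ i⟩
  refine (hmax i (mem_univ i)).trans ?_
  rcases le_or_gt (S i₀ + E) 0 with hSE | hSE
  · have : 0 ≤ (2 + 3 / ρt) * E + (1 + 2 / ρt) * RP + RD / ρt := by positivity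
    linarith
  have hdual : S i₀ / ρt - RD / ρt ≤ ∑ t ∈ Icc 1 τ, ∑ j, lam t j * g t j (x t) := by
    have := h2 (Pi.single i₀ (1 / ρt)) (fun j => by rw [Pi.single_apply]; split_ifs <;> positivity) (by simp)
    simpa [Pi.single_apply, S, Finset.mul_sum, div_eq_inv_mul] using this
  have hξs : ∑ t ∈ Icc 1 τ, ∑ j, lam t j * ∫ y, gbar j y ∂(ξs : Measure X) ≤ 0 :=
    sum_nonpos fun t ht => sum_nonpos fun j _ =>
      mul_nonpos_of_nonneg_of_nonpos ((hlam t ht).1 j) (hfeas j)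
  have htraj : ∑ t ∈ Icc 1 τ, fbar (x t) ≤ τ * ∫ y, fbar y ∂(ξs : Measure X) + (S i₀ + E) / ρ := by
    have := sum_le_card_mul_OPTval_add_div_dgval hfbm hfb01 hgbm hgb1 (by linarith)
      (nonempty_Icc.mpr hτ) x hSE.le fun j => by
        linarith [(abs_le.mp (h4b j)).1, hmax j (mem_univ j)]
    rwa [Nat.card_Icc, add_tsub_cancel_right, ← hopt, ← hρ] at this
  refine le_of_div_le_div_add hρt hρt2 (hρ ▸ dgval_le_one hgbm hgb1) hE hRP hRD hSE.le ?_
  rw [sum_sub_distrib, sum_sub_distrib] at h1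
  linarith [(abs_le.mp h3a).1, (abs_le.mp h3b).2, (abs_le.mp h4a).2]

/-- Deterministic core of "the algorithm never enters the recovery phase" in the fully
stochastic setting: the cumulative violation after `τ` play-phase rounds stays small. -/
theorem statement10 {X : Type} [MeasurableSpace X] {m : ℕ} (hm : 0 < m)
    (τ : ℕ) (hτ : 1 ≤ τ)
    (ρ ρt : ℝ) (hρpos : 0 < ρ)
    (gbar : Fin m → X → ℝ) (hgbm : ∀ i, Measurable (gbar i))
    (hgb1 : ∀ i y, gbar i y ∈ Set.Icc (-1:ℝ) 1)
    (hρ : ρ = dgval gbar)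
    (hρt : 0 < ρt) (hρt2 : ρt ≤ ρ / 2)
    (x : ℕ → X) (lam : ℕ → Fin m → ℝ)
    -- the dual iterates lie in `D_{ρ̃}`
    (hlam : ∀ t ∈ Finset.Icc 1 τ, (∀ i, 0 ≤ lam t i) ∧ ∑ i, lam t i ≤ 1 / ρt)
    (f : ℕ → X → ℝ) (g : ℕ → Fin m → X → ℝ)
    (hfm : ∀ t, Measurable (f t)) (hf01 : ∀ t y, f t y ∈ Set.Icc (0:ℝ) 1)
    (hgm : ∀ t i, Measurable (g t i)) (hg1 : ∀ t i y, g t i y ∈ Set.Icc (-1:ℝ) 1)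
    (fbar : X → ℝ) (hfbm : Measurable fbar) (hfb01 : ∀ y, fbar y ∈ Set.Icc (0:ℝ) 1)
    (ξs : ProbabilityMeasure X)
    (hfeas : ∀ i, ∫ y, gbar i y ∂(ξs : Measure X) ≤ 0)
    (hopt : (∫ y, fbar y ∂(ξs : Measure X)) = OPTval fbar gbar)
    (RP RD E : ℝ) (hRP : 0 ≤ RP) (hRD : 0 ≤ RD) (hE : 0 ≤ E)
    -- (i) primal regret bound
    (h1 : ∑ t ∈ Finset.Icc 1 τ, (f t (x t) - ∑ i, lam t i * g t i (x t)) ≥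
          ∑ t ∈ Finset.Icc 1 τ, ((∫ y, f t y ∂(ξs : Measure X)) -
            ∑ i, lam t i * ∫ y, g t i y ∂(ξs : Measure X)) - (1 + 2 / ρt) * RP)
    -- (ii) dual regret bound
    (h2 : ∀ l : Fin m → ℝ, (∀ i, 0 ≤ l i) → (∑ i, l i ≤ 1 / ρt) →
          ∑ t ∈ Finset.Icc 1 τ, ∑ i, lam t i * g t i (x t) ≥
          ∑ t ∈ Finset.Icc 1 τ, ∑ i, l i * g t i (x t) - RD / ρt)
    -- (iii) concentration at ξ*
    (h3a : |∑ t ∈ Finset.Icc 1 τ, (∫ y, f t y ∂(ξs : Measure X)) -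
             (τ : ℝ) * ∫ y, fbar y ∂(ξs : Measure X)| ≤ E)
    (h3b : |∑ t ∈ Finset.Icc 1 τ, ∑ i, lam t i * ∫ y, g t i y ∂(ξs : Measure X) -
             ∑ t ∈ Finset.Icc 1 τ, ∑ i, lam t i * ∫ y, gbar i y ∂(ξs : Measure X)| ≤ E / ρt)
    -- (iv) concentration along the trajectory
    (h4a : |∑ t ∈ Finset.Icc 1 τ, f t (x t) - ∑ t ∈ Finset.Icc 1 τ, fbar (x t)| ≤ E)
    (h4b : ∀ i, |∑ t ∈ Finset.Icc 1 τ, g t i (x t) -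
             ∑ t ∈ Finset.Icc 1 τ, gbar i (x t)| ≤ E) :
    ∀ i, ∑ t ∈ Finset.Icc 1 τ, g t i (x t) ≤
      (2 + 3 / ρt) * E + (1 + 2 / ρt) * RP + RD / ρt :=
  statement10_general τ hτ ρ ρt gbar hgbm hgb1 hρ hρt hρt2 x lam hlam f g fbar hfbm hfb01 ξs hfeas
    hopt RP RD E hRP hRD hE h1 h2 h3a h3b h4a h4b
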